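/- Let ρ₀ be a pure state and σ a density matrix sharing the same projection ϱ onto a subspace of Hermitian matrices, with Tr(ϱ²) ≥ 1/2. Then the squared Bures distance satisfies d_B²(ρ₀, σ) = 2(1 − √Tr(ρ₀σ)) ≤ 2(1 − √(2·Tr(ϱ²) − 1)). -/

import Mathlib

/-! Since `Tr((ρ₀ + σ) ϱ) = 2 Tr ϱ²`, expanding `0 ≤ Tr((ρ₀ + σ - 2ϱ)²)` gives
`4 Tr ϱ² ≤ Tr ρ₀² + 2 Tr(ρ₀σ) + Tr σ²`. With `Tr ρ₀² = 1` and `Tr σ² ≤ (Tr σ)² = 1` this is the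
fidelity bound `2 Tr ϱ² - 1 ≤ Tr(ρ₀σ)`, and the square root is monotone. -/

open Matrix ComplexOrder

namespace Matrix

variable {n 𝕜 : Type*} [Fintype n] [RCLike 𝕜]

lemma IsHermitian.re_trace_mul_self [DecidableEq n] {A : Matrix n n 𝕜} (hA : A.IsHermitian) :
    RCLike.re (A * A).trace = ∑ i, hA.eigenvalues i ^ 2 := by
  conv_lhs => rw [hA.spectral_theorem, ← map_mul, Unitary.conjStarAlgAut_apply, trace_mul_cycle,
    Unitary.coe_star_mul_self, one_mul, diagonal_mul_diagonal, trace_diagonal]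
  simp [sq]

lemma IsHermitian.re_trace_mul_self_nonneg {A : Matrix n n 𝕜} (hA : A.IsHermitian) :
    0 ≤ RCLike.re (A * A).trace := by
  classical
  rw [hA.re_trace_mul_self]
  positivity

lemma PosSemidef.re_trace_mul_self_le_sq {A : Matrix n n 𝕜} (hA : A.PosSemidef) :
    RCLike.re (A * A).trace ≤ RCLike.re A.trace ^ 2 := by
  classical
  rw [hA.1.re_trace_mul_self, hA.1.trace_eq_sum_eigenvalues, map_sum]
  simpa using Finset.sum_sq_le_sq_sum_of_nonneg fun i _ ↦ hA.eigenvalues_nonneg i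

lemma four_mul_re_trace_mul_self_le {ρ σ ϱ : Matrix n n 𝕜} (hρ : ρ.IsHermitian)
    (hσ : σ.IsHermitian) (hϱ : ϱ.IsHermitian) (hρϱ : (ρ * ϱ).trace = (ϱ * ϱ).trace)
    (hσϱ : (σ * ϱ).trace = (ϱ * ϱ).trace) :
    4 * RCLike.re (ϱ * ϱ).trace ≤
      RCLike.re (ρ * ρ).trace + 2 * RCLike.re (ρ * σ).trace + RCLike.re (σ * σ).trace := by
  have hnonneg := ((hρ.add hσ).sub (hϱ.add hϱ)).re_trace_mul_self_nonneg
  have hexpand : (((ρ + σ) - (ϱ + ϱ)) * ((ρ + σ) - (ϱ + ϱ))).trace =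
      (ρ * ρ).trace + 2 * (ρ * σ).trace + (σ * σ).trace - 4 * (ϱ * ϱ).trace := by
    simp only [add_mul, mul_add, sub_mul, mul_sub, trace_add, trace_sub]
    rw [trace_mul_comm σ ρ, trace_mul_comm ϱ ρ, trace_mul_comm ϱ σ, hρϱ, hσϱ]
    ring
  rw [hexpand] at hnonneg
  simp only [map_sub, map_add, RCLike.ofNat_mul_re] at hnonneg
  linarith

end Matrix

theorem stmt3_general {d : ℕ} (ρ₀ σ ϱ : Matrix (Fin d) (Fin d) ℂ)
    (V : Submodule ℝ (Matrix (Fin d) (Fin d) ℂ))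
    (hVH : ∀ A ∈ V, A.IsHermitian)
    (hρ₀ : ρ₀.PosSemidef)
    (hpure : Matrix.trace (ρ₀ * ρ₀) = 1)
    (hσ : σ.PosSemidef) (htσ : σ.trace = 1)
    (hϱV : ϱ ∈ V)
    (hρ₀proj : ∀ A ∈ V, Matrix.trace ((ρ₀ - ϱ) * A) = 0)
    (hσproj : ∀ A ∈ V, Matrix.trace ((σ - ϱ) * A) = 0) :
    2 * (1 - Real.sqrt ((Matrix.trace (ρ₀ * σ)).re)) ≤
      2 * (1 - Real.sqrt (2 * (Matrix.trace (ϱ * ϱ)).re - 1)) := by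
  have hρ₀ϱ : (ρ₀ * ϱ).trace = (ϱ * ϱ).trace := by
    simpa [sub_mul, sub_eq_zero] using hρ₀proj ϱ hϱV
  have hσϱ : (σ * ϱ).trace = (ϱ * ϱ).trace := by
    simpa [sub_mul, sub_eq_zero] using hσproj ϱ hϱV
  have hmid := four_mul_re_trace_mul_self_le hρ₀.1 hσ.1 (hVH ϱ hϱV) hρ₀ϱ hσϱ
  have hσσ := hσ.re_trace_mul_self_le_sq
  rw [hpure] at hmid
  rw [htσ] at hσσ
  have hfid : 2 * (ϱ * ϱ).trace.re - 1 ≤ (ρ₀ * σ).trace.re := by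
    simp only [RCLike.re_to_complex, Complex.one_re, one_pow] at hmid hσσ
    linarith
  gcongr

/-- Bures-distance bound for a pure target state:
d_B²(ρ₀,σ) = 2(1 − √Tr(ρ₀σ)) ≤ 2(1 − √(2 Tr ϱ² − 1)) whenever Tr ϱ² ≥ 1/2. -/
theorem stmt3 {d : ℕ} (ρ₀ σ ϱ : Matrix (Fin d) (Fin d) ℂ)
    (V : Submodule ℝ (Matrix (Fin d) (Fin d) ℂ))
    (hVH : ∀ A ∈ V, A.IsHermitian)
    (hρ₀ : ρ₀.PosSemidef) (htρ₀ : ρ₀.trace = 1)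
    (hpure : Matrix.trace (ρ₀ * ρ₀) = 1)
    (hσ : σ.PosSemidef) (htσ : σ.trace = 1)
    (hϱV : ϱ ∈ V)
    (hρ₀proj : ∀ A ∈ V, Matrix.trace ((ρ₀ - ϱ) * A) = 0)
    (hσproj : ∀ A ∈ V, Matrix.trace ((σ - ϱ) * A) = 0)
    (hhalf : (Matrix.trace (ϱ * ϱ)).re ≥ 1 / 2) :
    2 * (1 - Real.sqrt ((Matrix.trace (ρ₀ * σ)).re)) ≤
      2 * (1 - Real.sqrt (2 * (Matrix.trace (ϱ * ϱ)).re - 1)) :=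
  stmt3_general ρ₀ σ ϱ V hVH hρ₀ hpure hσ htσ hϱV hρ₀proj hσproj
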